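/- Let d ≥ 0, e > 0, a, b ∈ ℝ, and κ > 0. Let ν be the measure on ℝ with density f(β) = exp(−(1/2)[d·T_κ(β)² − 2a·T_κ(β) + e·β² − 2b·β]) with respect to Lebesgue measure, where T_κ(x) = sign(x)·max(|x|−κ, 0) is the soft-thresholding map (ν is a finite measure since e > 0). Then: (i) the normalization of ν restricted to the interval (−κ, κ) equals the Gaussian distribution on ℝ with mean b/e and variance 1/e conditioned on (−κ, κ); and (ii) the normalization of ν restricted to (κ, ∞) equals the Gaussian distribution with mean m₁ = (a + b + dκ)/(d+e) and variance 1/(d+e) conditioned on (κ, ∞). -/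
import Mathlib


open MeasureTheory ProbabilityTheory
open scoped ENNReal NNReal

lemma cond_withDensity_eq_of_proportional {f g : ℝ → ℝ≥0∞}
    {s : Set ℝ} (hs : MeasurableSet s) {c : ℝ≥0∞} (hc0 : c ≠ 0) (hc : c ≠ ∞)
    (hfg : ∀ x ∈ s, f x = c * g x) :
    ProbabilityTheory.cond (volume.withDensity f) s
      = ProbabilityTheory.cond (volume.withDensity g) s := by
  have hres : (volume.withDensity f).restrict s
      = c • (volume.withDensity g).restrict s := by
    rw [restrict_withDensity hs, restrict_withDensity hs, ← withDensity_smul' c g hc]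
    exact withDensity_congr_ae ((ae_restrict_iff' hs).2 (Filter.Eventually.of_forall hfg))
  have happ : (volume.withDensity f) s = c * (volume.withDensity g) s := by
    calc (volume.withDensity f) s = (volume.withDensity f).restrict s Set.univ := by
          rw [Measure.restrict_apply_univ]
      _ = (c • (volume.withDensity g).restrict s) Set.univ := by rw [hres]
      _ = c * (volume.withDensity g) s := by
          rw [Measure.smul_apply, smul_eq_mul, Measure.restrict_apply_univ]
  unfold ProbabilityTheory.cond
  rw [happ, hres, smul_smul]
  congr 1
  rw [mul_comm c ((volume.withDensity g) s),
    ENNReal.mul_inv (Or.inr hc) (Or.inr hc0), mul_assoc,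
    ENNReal.inv_mul_cancel hc0 hc, mul_one]

/-- the full conditional of `β` in the blocked Gibbs sampler is a mixture of
truncated Gaussians: normalizing the measure with density
`exp(−(1/2)[d·T_κ(β)² − 2a·T_κ(β) + e·β² − 2b·β])` restricted to `(−κ, κ)` gives the Gaussian
`N(b/e, 1/e)` conditioned on `(−κ, κ)`, and restricted to `(κ, ∞)` gives the Gaussian
`N((a+b+dκ)/(d+e), 1/(d+e))` conditioned on `(κ, ∞)`. -/
theorem full_conditional_truncated_gaussian_pieces (d e a b κ : ℝ)
    (hd : 0 ≤ d) (he : 0 < e) (hκ : 0 < κ) :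
    (ProbabilityTheory.cond
        (volume.withDensity fun β : ℝ => ENNReal.ofReal
          (Real.exp (-(1/2) * (d * (Real.sign β * max (|β| - κ) 0)^2
            - 2 * a * (Real.sign β * max (|β| - κ) 0) + e * β^2 - 2 * b * β))))
        (Set.Ioo (-κ) κ)
      = ProbabilityTheory.cond (gaussianReal (b / e) (Real.toNNReal (1 / e)))
          (Set.Ioo (-κ) κ)) ∧
    (ProbabilityTheory.cond
        (volume.withDensity fun β : ℝ => ENNReal.ofReal
          (Real.exp (-(1/2) * (d * (Real.sign β * max (|β| - κ) 0)^2
            - 2 * a * (Real.sign β * max (|β| - κ) 0) + e * β^2 - 2 * b * β))))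
        (Set.Ioi κ)
      = ProbabilityTheory.cond
          (gaussianReal ((a + b + d * κ) / (d + e)) (Real.toNNReal (1 / (d + e))))
          (Set.Ioi κ)) := by
  constructor
  · -- part (i): interval (−κ, κ)
    have hv : (Real.toNNReal (1 / e)) ≠ 0 := by
      simp only [ne_eq, Real.toNNReal_eq_zero, not_le]
      positivity
    have hvc : ((Real.toNNReal (1 / e)) : ℝ) = 1 / e :=
      Real.coe_toNNReal _ (by positivity)
    rw [gaussianReal_of_var_ne_zero _ hv]
    set C : ℝ := Real.sqrt (2 * Real.pi * (1 / e)) * Real.exp (b ^ 2 / (2 * e)) with hC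
    have hCpos : 0 < C := by positivity
    refine cond_withDensity_eq_of_proportional measurableSet_Ioo
      (c := ENNReal.ofReal C) ?_ ENNReal.ofReal_ne_top ?_
    · exact (ENNReal.ofReal_pos.mpr hCpos).ne'
    · intro x hx
      have hmax : max (|x| - κ) 0 = 0 := by
        have : |x| < κ := abs_lt.2 ⟨hx.1, hx.2⟩
        exact max_eq_right (by linarith)
      rw [hmax, mul_zero, gaussianPDF, ← ENNReal.ofReal_mul hCpos.le]
      congr 1
      rw [gaussianPDFReal, hvc, hC]
      have hsq : Real.sqrt (2 * Real.pi * (1 / e)) ≠ 0 := by positivity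
      rw [mul_mul_mul_comm, mul_inv_cancel₀ hsq, one_mul, ← Real.exp_add]
      congr 1
      field_simp
      ring
  · -- part (ii): interval (κ, ∞)
    have ht : 0 < d + e := by linarith
    have hv : (Real.toNNReal (1 / (d + e))) ≠ 0 := by
      simp only [ne_eq, Real.toNNReal_eq_zero, not_le]
      positivity
    have hvc : ((Real.toNNReal (1 / (d + e))) : ℝ) = 1 / (d + e) :=
      Real.coe_toNNReal _ (by positivity)
    rw [gaussianReal_of_var_ne_zero _ hv]
    set C : ℝ := Real.sqrt (2 * Real.pi * (1 / (d + e))) *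
      Real.exp (((d + e) * ((a + b + d * κ) / (d + e)) ^ 2 - (d * κ ^ 2 + 2 * a * κ)) / 2)
      with hC
    have hCpos : 0 < C := by positivity
    refine cond_withDensity_eq_of_proportional measurableSet_Ioi
      (c := ENNReal.ofReal C) ?_ ENNReal.ofReal_ne_top ?_
    · exact (ENNReal.ofReal_pos.mpr hCpos).ne'
    · intro x hx
      have hxpos : 0 < x := lt_trans hκ hx
      have hsign : Real.sign x = 1 := Real.sign_of_pos hxpos
      have habs : |x| = x := abs_of_pos hxpos
      have hmax : max (|x| - κ) 0 = |x| - κ := by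
        rw [habs]
        exact max_eq_left (by linarith [Set.mem_Ioi.mp hx])
      rw [hmax, habs, hsign, one_mul, gaussianPDF, ← ENNReal.ofReal_mul hCpos.le]
      congr 1
      rw [gaussianPDFReal, hvc, hC]
      have hsq : Real.sqrt (2 * Real.pi * (1 / (d + e))) ≠ 0 := by positivity
      rw [mul_mul_mul_comm, mul_inv_cancel₀ hsq, one_mul, ← Real.exp_add]
      congr 1
      have hne : d + e ≠ 0 := ht.ne'
      field_simp
      ring
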